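/- Let m ≥ 3. There exist linearly independent vectors Q_1,…,Q_m ∈ ℂ^{m+1} and a plane W ⊆ ℂ^{m+1} (3-dimensional linear subspace) containing Q_2 and Q_3, such that the ℂ-vector space of forms of degree m in m+1 variables vanishing to order ≥ m−1 at each point [Q_i] and vanishing identically on W (i.e. F(w) = 0 for all w ∈ W) has dimension exactly 2^m − 4. -/

import Mathlib

open MvPolynomial

/-- Composition of partial derivatives along a list of variable indices. -/
noncomputable def derivMap {N : ℕ} (l : List (Fin N)) :
    MvPolynomial (Fin N) ℂ →ₗ[ℂ] MvPolynomial (Fin N) ℂ :=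
  l.foldr (fun i f => (pderiv i).toLinearMap.comp f) LinearMap.id

/-- The subspace of polynomials vanishing to order ≥ k at the point `a`,
i.e. all iterated partial derivatives of total order ≤ k-1 vanish at `a`. -/
noncomputable def vanishingSubmodule {N : ℕ} (a : Fin N → ℂ) (k : ℕ) :
    Submodule ℂ (MvPolynomial (Fin N) ℂ) :=
  ⨅ (l : List (Fin N)) (_ : l.length < k),
    LinearMap.ker ((aeval a).toLinearMap.comp (derivMap l))

/-- The subspace of polynomials vanishing identically on a linear subspace `W`. -/
noncomputable def vanishOnSubmodule {N : ℕ} (W : Submodule ℂ (Fin N → ℂ)) :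
    Submodule ℂ (MvPolynomial (Fin N) ℂ) :=
  ⨅ (w : W), LinearMap.ker ((aeval (w : Fin N → ℂ)).toLinearMap)

/-!
Take `Q i = e_{i+1}` and `W = ⟨e_0, e_2, e_3⟩`. Every condition is a condition on the monomials
of `F`: at a coordinate point `e_i`, `∂^l F (e_i)` is a nonzero multiple of the single coefficient
of `x^l · x_i^(n - |l|)`, so a form of degree `n` vanishes to order `k` at `e_i` iff each of its
monomials `x^d` has `d i + k ≤ n`; and `F` vanishes on the span of `e_j, j ∈ A` iff none of its
monomials involves only variables from `A`. Hence the space has the basis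
`x_0^(m - |S|) ∏_{i ∈ S} x_{i+1}`, `S ⊆ {0, …, m-1}`, `S ⊄ {1, 2}`: there are `2^m - 4` of them.
-/

section Derivatives

variable {N : ℕ}

theorem derivMap_cons (a : Fin N) (l : List (Fin N)) (F : MvPolynomial (Fin N) ℂ) :
    derivMap (a :: l) F = pderiv a (derivMap l F) := rfl

theorem derivMap_monomial (l : List (Fin N)) (d : Fin N →₀ ℕ) (c : ℂ) :
    derivMap l (monomial d c) =
      monomial (d - Multiset.toFinsupp l) (c * ∏ j, ((d j).descFactorial (l.count j) : ℂ)) := by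
  induction l with
  | nil => simp [derivMap]
  | cons a l ih =>
    have hfactor : ∀ j, ((d j).descFactorial ((a :: l).count j) : ℂ) =
        (d j).descFactorial (l.count j) * if j = a then ((d a - l.count a : ℕ) : ℂ) else 1 := by
      intro j
      rcases eq_or_ne j a with rfl | hj
      · simp [Nat.descFactorial_succ, mul_comm]
      · simp [hj.symm, hj]
    rw [derivMap_cons, ih, pderiv_monomial, ← Multiset.cons_coe, ← Multiset.singleton_add,
      Multiset.toFinsupp_add, Multiset.toFinsupp_singleton, add_comm, tsub_add_eq_tsub_tsub,
      Finset.prod_congr rfl fun j _ => hfactor j, Finset.prod_mul_distrib, Finset.prod_ite_eq']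
    simp [mul_assoc]

theorem prod_descFactorial_ne_zero_iff (l : List (Fin N)) (d : Fin N →₀ ℕ) :
    (∏ j, ((d j).descFactorial (l.count j) : ℂ)) ≠ 0 ↔ Multiset.toFinsupp l ≤ d := by
  simp [Finset.prod_ne_zero_iff, Nat.descFactorial_eq_zero_iff_lt, Finsupp.le_def]

theorem degree_toFinsupp (l : List (Fin N)) :
    (Multiset.toFinsupp (l : Multiset (Fin N))).degree = l.length := by
  rw [← Multiset.coe_card, ← Multiset.toFinsupp_sum_eq]
  rfl

end Derivatives

section Evaluation

variable {σ R S : Type*} [CommSemiring R] [CommSemiring S] [Algebra R S]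

theorem aeval_monomial_eq_zero_of_mem_support {x : σ → S} {d : σ →₀ ℕ} {j : σ}
    (hj : j ∈ d.support) (hx : x j = 0) (c : R) : aeval x (monomial d c) = 0 := by
  rw [aeval_monomial, Finsupp.prod,
    Finset.prod_eq_zero hj (by simp [hx, Finsupp.mem_support_iff.mp hj]), mul_zero]

theorem aeval_monomial_congr {x y : σ → S} {d : σ →₀ ℕ} (h : ∀ j ∈ d.support, x j = y j)
    (c : R) : aeval x (monomial d c) = aeval y (monomial d c) := by
  rw [aeval_monomial, aeval_monomial, Finsupp.prod, Finsupp.prod,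
    Finset.prod_congr rfl fun j hj => by rw [h j hj]]

theorem aeval_pi_single_monomial_single [DecidableEq σ] (i : σ) (t : ℕ) (c : R) :
    aeval (Pi.single i 1 : σ → S) (monomial (Finsupp.single i t) c) = algebraMap R S c := by
  simp [aeval_monomial]

end Evaluation

section VanishingAtCoordinatePoint

variable {N n : ℕ} {F : MvPolynomial (Fin N) ℂ}

theorem mem_vanishingSubmodule_iff (a : Fin N → ℂ) (k : ℕ) :
    F ∈ vanishingSubmodule a k ↔
      ∀ l : List (Fin N), l.length < k → aeval a (derivMap l F) = 0 := by
  simp [vanishingSubmodule, Submodule.mem_iInf]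

theorem aeval_pi_single_derivMap_eq_zero_iff (hF : F.IsHomogeneous n) (i : Fin N)
    (l : List (Fin N)) : aeval (Pi.single i (1 : ℂ)) (derivMap l F) = 0 ↔
      coeff (Multiset.toFinsupp l + Finsupp.single i (n - l.length)) F = 0 := by
  set cl : Fin N →₀ ℕ := Multiset.toFinsupp l
  set d₀ := cl + Finsupp.single i (n - l.length)
  have hterm : ∀ d ∈ F.support, d ≠ d₀ →
      aeval (Pi.single i (1 : ℂ)) (derivMap l (monomial d (coeff d F))) = 0 := by
    intro d hd hne
    rw [derivMap_monomial]
    by_cases hK : (∏ j, ((d j).descFactorial (l.count j) : ℂ)) = 0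
    · simp [hK]
    by_cases hsupp : (d - cl).support ⊆ {i}
    · refine absurd ?_ hne
      have hcl : cl ≤ d := (prod_descFactorial_ne_zero_iff l d).mp hK
      have hd_eq : d = cl + Finsupp.single i ((d - cl) i) := by
        rw [← Finsupp.support_subset_singleton.mp hsupp, add_tsub_cancel_of_le hcl]
      have hdeg : cl.degree + (d - cl) i = n := by
        have := (hF.degree_eq_sum_deg_support hd).symm
        rwa [← Finsupp.degree_apply, hd_eq, map_add, Finsupp.degree_single] at this
      rw [degree_toFinsupp] at hdeg
      rw [hd_eq, show (d - cl) i = n - l.length by omega]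
    · obtain ⟨j, hj, hji⟩ := Finset.not_subset.mp hsupp
      exact aeval_monomial_eq_zero_of_mem_support hj
        (Pi.single_eq_of_ne (by simpa using hji) _) _
  have hsum : aeval (Pi.single i (1 : ℂ)) (derivMap l F) =
      coeff d₀ F * ∏ j, ((d₀ j).descFactorial (l.count j) : ℂ) := by
    conv_lhs => rw [F.as_sum, map_sum, map_sum]
    rw [Finset.sum_eq_single d₀ hterm fun h => by simp [notMem_support_iff.mp h],
      derivMap_monomial, add_tsub_cancel_left, aeval_pi_single_monomial_single]
    rfl
  have hK : (∏ j, ((d₀ j).descFactorial (l.count j) : ℂ)) ≠ 0 :=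
    (prod_descFactorial_ne_zero_iff l d₀).mpr le_self_add
  rw [hsum, mul_eq_zero, or_iff_left hK]

theorem mem_vanishingSubmodule_pi_single_iff (hF : F.IsHomogeneous n) (i : Fin N) (k : ℕ) :
    F ∈ vanishingSubmodule (Pi.single i (1 : ℂ)) k ↔ ∀ d ∈ F.support, d i + k ≤ n := by
  rw [mem_vanishingSubmodule_iff]
  constructor
  · intro h d hd
    by_contra! hlt
    set l := (Finsupp.toMultiset (d.erase i)).toList
    have hcl : Multiset.toFinsupp (l : Multiset (Fin N)) = d.erase i := by simp [l]
    have hdeg : l.length + d i = n := by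
      rw [← degree_toFinsupp, hcl, ← Finsupp.degree_single i (d i), ← map_add,
        Finsupp.erase_add_single, hF.degree_eq_sum_deg_support hd]
      rfl
    have := (aeval_pi_single_derivMap_eq_zero_iff hF i l).mp (h l (by omega))
    rw [hcl, show n - l.length = d i by omega, Finsupp.erase_add_single] at this
    exact mem_support_iff.mp hd this
  · intro h l hl
    rw [aeval_pi_single_derivMap_eq_zero_iff hF i l]
    by_contra hne
    have hd := h _ (mem_support_iff.mpr hne)
    have hdeg := hF.degree_eq_sum_deg_support (mem_support_iff.mpr hne)
    rw [← Finsupp.degree_apply, map_add, Finsupp.degree_single, degree_toFinsupp] at hdeg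
    simp only [Finsupp.add_apply, Finsupp.single_eq_same] at hd
    omega

end VanishingAtCoordinatePoint

section CoordinateSubspace

variable {K ι : Type*} [Field K] [DecidableEq ι]

variable (K) in
def coordinateSubspace (A : Finset ι) : Submodule K (ι → K) :=
  Submodule.span K ((fun j => Pi.single j 1) '' A)

theorem mem_coordinateSubspace_iff [Fintype ι] {A : Finset ι} {w : ι → K} :
    w ∈ coordinateSubspace K A ↔ ∀ j ∉ A, w j = 0 := by
  constructor
  · intro hw
    have : coordinateSubspace K A ≤ Submodule.pi (↑A)ᶜ fun _ => ⊥ := by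
      rw [coordinateSubspace, Submodule.span_le]
      rintro - ⟨j, hj, rfl⟩ i hi
      simp [show i ≠ j from fun h => hi (h ▸ hj)]
    simpa using this hw
  · intro hw
    rw [← Finset.univ_sum_single w]
    refine Submodule.sum_mem _ fun j _ => ?_
    by_cases hj : j ∈ A
    · rw [← mul_one (w j), ← smul_eq_mul, Pi.single_smul']
      exact Submodule.smul_mem _ _ (Submodule.subset_span ⟨j, hj, rfl⟩)
    · simp [hw j hj]

theorem finrank_coordinateSubspace (A : Finset ι) :
    Module.finrank K (coordinateSubspace K A) = A.card := by
  have hli : LinearIndependent K fun j : (A : Set ι) => (Pi.single (j : ι) (1 : K) : ι → K) :=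
    (Pi.linearIndependent_single_one ι K).comp _ Subtype.val_injective
  rw [coordinateSubspace, Set.image_eq_range, finrank_span_eq_card hli]
  simp

end CoordinateSubspace

theorem mem_vanishOnSubmodule_coordinateSubspace_iff {N : ℕ} (A : Finset (Fin N))
    (F : MvPolynomial (Fin N) ℂ) :
    F ∈ vanishOnSubmodule (coordinateSubspace ℂ A) ↔ ∀ d ∈ F.support, ¬ d.support ⊆ A := by
  simp only [vanishOnSubmodule, Submodule.mem_iInf, LinearMap.mem_ker, AlgHom.toLinearMap_apply,
    Subtype.forall, mem_coordinateSubspace_iff]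
  constructor
  · intro h d hd hdA
    set G := ∑ d ∈ F.support with d.support ⊆ A, monomial d (coeff d F)
    -- `G(x)` is the value of `F` at the projection of `x` to the coordinate subspace.
    have hG : G = 0 := MvPolynomial.funext fun x => by
      rw [map_zero, ← coe_aeval_eq_eval,
        ← h (fun j => if j ∈ A then x j else 0) fun j hj => if_neg hj,
        F.as_sum, map_sum, map_sum, Finset.sum_filter]
      refine Finset.sum_congr rfl fun e _ => ?_
      split_ifs with he
      · exact aeval_monomial_congr (fun j hj => (if_pos (he hj)).symm) _
      · obtain ⟨j, hje, hjA⟩ := Finset.not_subset.mp he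
        exact (aeval_monomial_eq_zero_of_mem_support hje (if_neg hjA) _).symm
    have hcoeff : coeff d G = coeff d F := by
      simp [G, coeff_sum, coeff_monomial, hd, hdA]
    exact mem_support_iff.mp hd (by rw [← hcoeff, hG, coeff_zero])
  · intro h w hw
    rw [F.as_sum, map_sum]
    refine Finset.sum_eq_zero fun d hd => ?_
    obtain ⟨j, hjd, hjA⟩ := Finset.not_subset.mp (h d hd)
    exact aeval_monomial_eq_zero_of_mem_support hjd (hw j hjA) _

section Exponents

variable {m : ℕ}

noncomputable def exponentOfFinset (S : Finset (Fin m)) : Fin (m + 1) →₀ ℕ :=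
  Finsupp.equivFunOnFinite.symm (Fin.cons (m - S.card) fun i => if i ∈ S then 1 else 0)

@[simp]
theorem exponentOfFinset_zero (S : Finset (Fin m)) : exponentOfFinset S 0 = m - S.card := by
  simp [exponentOfFinset]

@[simp]
theorem exponentOfFinset_succ (S : Finset (Fin m)) (i : Fin m) :
    exponentOfFinset S i.succ = if i ∈ S then 1 else 0 := by
  simp [exponentOfFinset]

theorem exponentOfFinset_injective : Function.Injective (exponentOfFinset (m := m)) := by
  intro S T h
  ext i
  have := DFunLike.congr_fun h i.succ
  simp only [exponentOfFinset_succ] at this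
  split_ifs at this <;> simp_all

theorem degree_exponentOfFinset (S : Finset (Fin m)) : (exponentOfFinset S).degree = m := by
  have := S.card_le_univ
  rw [Finsupp.degree_eq_sum, Fin.sum_univ_succ]
  simp only [exponentOfFinset_zero, exponentOfFinset_succ, Finset.sum_boole]
  simp only [Fintype.card_fin, Finset.subset_univ, Finset.filter_mem_eq_of_subset,
    Nat.cast_id] at this ⊢
  omega

theorem eq_exponentOfFinset {d : Fin (m + 1) →₀ ℕ} (hdeg : d.degree = m)
    (hd : ∀ i : Fin m, d i.succ ≤ 1) : d = exponentOfFinset {i | d i.succ = 1} := by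
  have hsucc : ∀ i : Fin m, d i.succ = if d i.succ = 1 then 1 else 0 := fun i => by
    have := hd i
    split_ifs <;> omega
  ext j
  refine Fin.cases ?_ (fun i => by simpa using hsucc i) j
  rw [Finsupp.degree_eq_sum, Fin.sum_univ_succ, Finset.sum_congr rfl fun i _ => hsucc i,
    Finset.sum_boole] at hdeg
  simp only [Nat.cast_id, exponentOfFinset_zero] at hdeg ⊢
  omega

theorem support_exponentOfFinset_subset_iff (S B : Finset (Fin m)) :
    (exponentOfFinset S).support ⊆ insert 0 (B.map (Fin.succEmb m)) ↔ S ⊆ B := by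
  constructor
  · intro h i hi
    have := h (Finsupp.mem_support_iff.mpr (by simp [hi] : exponentOfFinset S i.succ ≠ 0))
    simpa [Fin.succ_ne_zero] using this
  · intro h j hj
    induction j using Fin.cases with
    | zero => simp
    | succ i => simp_all [h _]

def vanishingExponents (B : Finset (Fin m)) : Set (Fin (m + 1) →₀ ℕ) :=
  {d | d.degree = m ∧ (∀ i : Fin m, d i.succ ≤ 1) ∧
    ¬ d.support ⊆ insert 0 (B.map (Fin.succEmb m))}

theorem image_exponentOfFinset (B : Finset (Fin m)) :
    exponentOfFinset '' {S | ¬ S ⊆ B} = vanishingExponents B := by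
  ext d
  constructor
  · rintro ⟨S, hS, rfl⟩
    refine ⟨degree_exponentOfFinset S, fun i => ?_, ?_⟩
    · simp only [exponentOfFinset_succ]
      split_ifs <;> omega
    · rwa [support_exponentOfFinset_subset_iff]
  · rintro ⟨hdeg, hd, hsupp⟩
    rw [eq_exponentOfFinset hdeg hd, support_exponentOfFinset_subset_iff] at hsupp
    exact ⟨_, hsupp, (eq_exponentOfFinset hdeg hd).symm⟩

theorem card_vanishingExponents (B : Finset (Fin m)) :
    Nat.card (vanishingExponents B) = 2 ^ m - 2 ^ B.card := by
  have hS : {S | ¬ S ⊆ B} = ((B.powersetᶜ : Finset (Finset (Fin m))) : Set (Finset (Fin m))) := by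
    ext
    simp
  rw [← image_exponentOfFinset, Nat.card_image_of_injective exponentOfFinset_injective, hS,
    Nat.card_coe_set_eq, Set.ncard_coe_finset, Finset.card_compl, Fintype.card_finset,
    Fintype.card_fin, Finset.card_powerset]

end Exponents

theorem homogeneous_inf_vanishing_inf_vanishOn_eq_restrictSupport (m : ℕ) (B : Finset (Fin m)) :
    homogeneousSubmodule (Fin (m + 1)) ℂ m ⊓
        (⨅ i : Fin m, vanishingSubmodule (Pi.single i.succ (1 : ℂ)) (m - 1)) ⊓
        vanishOnSubmodule (coordinateSubspace ℂ (insert 0 (B.map (Fin.succEmb m)))) =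
      restrictSupport ℂ (vanishingExponents B) := by
  ext F
  rw [Submodule.mem_inf, Submodule.mem_inf, Submodule.mem_iInf, mem_homogeneousSubmodule,
    mem_vanishOnSubmodule_coordinateSubspace_iff, mem_restrictSupport_iff]
  constructor
  · rintro ⟨⟨hF, hvan⟩, hW⟩ d hd
    refine ⟨(hF.degree_eq_sum_deg_support hd).symm, fun i => ?_, hW d hd⟩
    have := (mem_vanishingSubmodule_pi_single_iff hF _ _).mp (hvan i) d hd
    omega
  · intro h
    have hF : F.IsHomogeneous m := by
      rw [← mem_homogeneousSubmodule, homogeneousSubmodule_eq_finsupp_supported]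
      exact fun d hd => (h hd).1
    refine ⟨⟨hF, fun i => (mem_vanishingSubmodule_pi_single_iff hF _ _).mpr fun d hd => ?_⟩,
      fun d hd => (h hd).2.2⟩
    have := (h hd).2.1 i
    have := i.pos
    omega

theorem finrank_homogeneous_inf_vanishing_inf_vanishOn (m : ℕ) (B : Finset (Fin m)) :
    Module.finrank ℂ ↥(homogeneousSubmodule (Fin (m + 1)) ℂ m ⊓
        (⨅ i : Fin m, vanishingSubmodule (Pi.single i.succ (1 : ℂ)) (m - 1)) ⊓
        vanishOnSubmodule (coordinateSubspace ℂ (insert 0 (B.map (Fin.succEmb m))))) =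
      2 ^ m - 2 ^ B.card := by
  rw [homogeneous_inf_vanishing_inf_vanishOn_eq_restrictSupport,
    Module.finrank_eq_nat_card_basis (basisRestrictSupport ℂ _), card_vanishingExponents]

theorem stmt13 (m : ℕ) (hm : 3 ≤ m) :
    ∃ (Q : Fin m → (Fin (m + 1) → ℂ)) (W : Submodule ℂ (Fin (m + 1) → ℂ)),
      LinearIndependent ℂ Q ∧
      Module.finrank ℂ W = 3 ∧
      Q ⟨1, by omega⟩ ∈ W ∧ Q ⟨2, by omega⟩ ∈ W ∧
      (Module.finrank ℂ
        ↥(homogeneousSubmodule (Fin (m + 1)) ℂ m ⊓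
          (⨅ i, vanishingSubmodule (Q i) (m - 1)) ⊓
          vanishOnSubmodule W) : ℤ)
        = 2 ^ m - 4 := by
  set B : Finset (Fin m) := {⟨1, by omega⟩, ⟨2, by omega⟩}
  have hB : B.card = 2 := Finset.card_pair (by simp [Fin.ext_iff])
  have hsucc_mem : ∀ i ∈ B, i.succ ∈ insert 0 (B.map (Fin.succEmb m)) := fun i hi => by simp [hi]
  refine ⟨fun i => Pi.single i.succ 1, coordinateSubspace ℂ (insert 0 (B.map (Fin.succEmb m))),
    (Pi.linearIndependent_single_one _ ℂ).comp _ (Fin.succ_injective m), ?_,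
    Submodule.subset_span ⟨_, hsucc_mem _ (by simp [B]), rfl⟩,
    Submodule.subset_span ⟨_, hsucc_mem _ (by simp [B]), rfl⟩, ?_⟩
  · rw [finrank_coordinateSubspace, Finset.card_insert_of_notMem (by simp), Finset.card_map, hB]
  · have h4 : 4 ≤ 2 ^ m := le_trans (by norm_num) (Nat.pow_le_pow_right two_pos hm)
    rw [finrank_homogeneous_inf_vanishing_inf_vanishOn, hB]
    push_cast [h4]
    ring
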